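/- arXiv:1106.4074 — 2 statements merged into one kernel-verified Lean document; each statement's English description precedes it below -/
import Mathlib

section
/- For every x ∈ M, the set pω(x) of limits of convergent subsequences of the empiric probabilities either consists of a single element or is uncountable. -/
open MeasureTheory Filter Topology ENNReal NNReal

variable {M : Type*} [MetricSpace M] [CompactSpace M] [MeasurableSpace M] [BorelSpace M]

/-- The empiric probability `E_{n+1}(x) = (1/(n+1)) ∑_{j=0}^{n} δ_{f^j(x)}`.
(The indexing is shifted: `empiric f x n` is the `(n+1)`-st empiric probability `E_{n+1}(x)`,
so that `(empiric f x n)_{n ≥ 0}` is exactly the sequence `(E_n(x))_{n ≥ 1}`.) -/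
noncomputable def empiric (f : M → M) (x : M) (n : ℕ) : ProbabilityMeasure M :=
  ⟨((n : ℝ≥0∞) + 1)⁻¹ • ∑ j ∈ Finset.range (n + 1), MeasureTheory.Measure.dirac (f^[j] x), by
    constructor
    rw [Measure.smul_apply, Measure.finset_sum_apply]
    simp only [Measure.dirac_apply_of_mem (Set.mem_univ _), Finset.sum_const,
      Finset.card_range, nsmul_eq_mul, mul_one, smul_eq_mul]
    rw [Nat.cast_add, Nat.cast_one]
    exact ENNReal.inv_mul_cancel (by simp) (by simp)⟩

/-- The limit set `pω(x)`: all weak* limits of convergent subsequences of the sequence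
of empiric probabilities `(E_n(x))_{n ≥ 1}`. -/
def pomega (f : M → M) (x : M) : Set (ProbabilityMeasure M) :=
  {μ | ∃ φ : ℕ → ℕ, StrictMono φ ∧ Tendsto (fun k => empiric f x (φ k)) atTop (𝓝 μ)}

/-- The Lévy–Prokhorov distance between two Borel probability measures. -/
noncomputable def probDist (μ ν : ProbabilityMeasure M) : ℝ :=
  levyProkhorovDist (μ : Measure M) (ν : Measure M)

/-- The basin of `ε`-attraction of `μ`:
`A_ε(μ) = {x ∈ M : inf_{ν ∈ pω(x)} dist(ν, μ) < ε}`. -/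
def basinEps (f : M → M) (μ : ProbabilityMeasure M) (ε : ℝ) : Set M :=
  {x | (⨅ ν ∈ pomega f x, probDist ν μ) < ε}

/-- `μ` is observable (SRB-like): for every `ε > 0`, the basin of `ε`-attraction of `μ`
has positive `m`-measure. -/
def Observable (f : M → M) (m : Measure M) (μ : ProbabilityMeasure M) : Prop :=
  ∀ ε : ℝ, 0 < ε → 0 < m (basinEps f μ ε)

/-- The basin of attraction `A(μ) = {x ∈ M : pω(x) = {μ}}`. -/
def basin (f : M → M) (μ : ProbabilityMeasure M) : Set M :=
  {x | pomega f x = {μ}}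

/-- `μ` is an SRB (physical) measure: its basin of attraction has positive `m`-measure. -/
def IsSRB (f : M → M) (m : Measure M) (μ : ProbabilityMeasure M) : Prop :=
  0 < m (basin f μ)

/-! Fix `g : M →ᵇ ℝ` and put `aₙ = ∫ g dEₙ(x)`. These are Birkhoff averages of `g` along the
orbit of `x`, so `aₙ₊₁ - aₙ = O(1/n)`, and the cluster values of a real sequence with vanishing
increments form an interval. Since `P` is compact, every cluster value of `(aₙ)` is `∫ g dμ` for
some `μ ∈ pω(x)`. If `pω(x)` contains `μ ≠ ν`, choose `g` with `∫ g dμ ≠ ∫ g dν`: the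
image of `pω(x)` under `μ ↦ ∫ g dμ` contains a nondegenerate interval. -/

open Set BoundedContinuousFunction

section BirkhoffAverage

variable (𝕜 : Type*) {α E : Type*} [RCLike 𝕜] [NormedAddCommGroup E] [NormedSpace 𝕜 E]

theorem birkhoffAverage_succ_sub_birkhoffAverage (f : α → α) (g : α → E) (n : ℕ) (x : α) :
    birkhoffAverage 𝕜 f g (n + 1) x - birkhoffAverage 𝕜 f g n x =
      ((n : 𝕜) + 1)⁻¹ • (g (f^[n] x) - birkhoffAverage 𝕜 f g n x) := by
  have hS : birkhoffSum f g n x = (n : 𝕜) • birkhoffAverage 𝕜 f g n x := by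
    rcases eq_or_ne n 0 with rfl | hn
    · simp
    · rw [birkhoffAverage, smul_inv_smul₀ (by exact_mod_cast hn)]
  have hn : ((n : 𝕜) + 1)⁻¹ * ((n : 𝕜) + 1) = 1 :=
    inv_mul_cancel₀ (by exact_mod_cast n.succ_ne_zero)
  calc _ = ((n : 𝕜) + 1)⁻¹ • ((n : 𝕜) • birkhoffAverage 𝕜 f g n x + g (f^[n] x)) -
        (((n : 𝕜) + 1)⁻¹ * ((n : 𝕜) + 1)) • birkhoffAverage 𝕜 f g n x := by
        rw [hn, one_smul, ← hS, ← birkhoffSum_succ, ← Nat.cast_succ, ← birkhoffAverage]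
    _ = _ := by module

theorem norm_birkhoffAverage_le {f : α → α} {g : α → E} {x : α} {C : ℝ}
    (hC : ∀ k, ‖g (f^[k] x)‖ ≤ C) (n : ℕ) : ‖birkhoffAverage 𝕜 f g n x‖ ≤ C := by
  rcases eq_or_ne n 0 with rfl | hn
  · simpa using (norm_nonneg _).trans (hC 0)
  rw [birkhoffAverage, norm_smul, norm_inv, RCLike.norm_natCast, inv_mul_le_iff₀ (by positivity)]
  calc ‖birkhoffSum f g n x‖ ≤ ∑ k ∈ Finset.range n, ‖g (f^[k] x)‖ := norm_sum_le _ _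
    _ ≤ n * C := (Finset.sum_le_sum fun k _ => hC k).trans (by simp)

theorem tendsto_birkhoffAverage_succ_sub_birkhoffAverage {f : α → α} {g : α → E} {x : α}
    (h : Bornology.IsBounded (range (g <| f^[·] x))) :
    Tendsto (fun n ↦ birkhoffAverage 𝕜 f g (n + 1) x - birkhoffAverage 𝕜 f g n x) atTop
      (𝓝 0) := by
  obtain ⟨C, hC⟩ := isBounded_iff_forall_norm_le.1 h
  have hC' : ∀ k, ‖g (f^[k] x)‖ ≤ C := fun k => hC _ (mem_range_self k)
  have hlim : Tendsto (fun n : ℕ ↦ (2 * C) / ((n : ℝ) + 1)) atTop (𝓝 0) :=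
    tendsto_const_nhds.div_atTop (tendsto_natCast_atTop_atTop.atTop_add tendsto_const_nhds)
  refine squeeze_zero_norm (fun n ↦ ?_) hlim
  rw [birkhoffAverage_succ_sub_birkhoffAverage, norm_smul, norm_inv, div_eq_inv_mul]
  have hnorm : ‖((n : 𝕜) + 1)‖ = (n : ℝ) + 1 := by
    exact_mod_cast RCLike.norm_natCast (K := 𝕜) (n + 1)
  rw [hnorm]
  gcongr
  calc _ ≤ ‖g (f^[n] x)‖ + ‖birkhoffAverage 𝕜 f g n x‖ := norm_sub_le _ _
    _ ≤ 2 * C := by linarith [hC' n, norm_birkhoffAverage_le 𝕜 hC' n]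

end BirkhoffAverage

theorem ordConnected_setOf_mapClusterPt_of_tendsto_sub {a : ℕ → ℝ}
    (ha : Tendsto (fun n ↦ a (n + 1) - a n) atTop (𝓝 0)) :
    OrdConnected {c | MapClusterPt c atTop a} := by
  refine ⟨fun p hp q hq c ⟨hpc, hcq⟩ ↦ ?_⟩
  rcases hpc.eq_or_lt with rfl | hpc
  · exact hp
  rcases hcq.eq_or_lt with rfl | hcq
  · exact hq
  rw [mem_ofPred_eq, Metric.nhds_basis_ball.mapClusterPt_iff_frequently]
  intro ε hε
  by_contra hfar
  rw [not_frequently] at hfar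
  -- Once `a` stays `ε`-away from `c` and moves by less than `ε`, it can no longer cross `c`.
  have hstep : ∀ᶠ n in atTop, a n < c → a (n + 1) < c := by
    filter_upwards [(tendsto_add_atTop_nat 1).eventually hfar,
      ha.eventually (Metric.ball_mem_nhds 0 hε)] with n hfar' hsmall hn
    rw [Metric.mem_ball, Real.dist_eq, not_lt] at hfar'
    rw [Real.dist_eq, sub_zero, abs_lt] at hsmall
    by_contra! hge
    rw [abs_of_nonneg (sub_nonneg.2 hge)] at hfar'
    linarith
  obtain ⟨N, hN⟩ := eventually_atTop.1 hstep
  obtain ⟨n₀, hn₀, hlt⟩ := (hp.frequently (Iio_mem_nhds hpc)).forall_exists_of_atTop N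
  have hbelow : ∀ n ≥ n₀, a n < c := fun n hn ↦
    Nat.le_induction hlt (fun m hm h ↦ hN m (hn₀.trans hm) h) n hn
  obtain ⟨n, hn, hgt⟩ := (hq.frequently (Ioi_mem_nhds hcq)).forall_exists_of_atTop n₀
  exact (hbelow n hn).not_gt hgt

theorem exists_mapClusterPt_eq_of_mapClusterPt_comp {X Y ι : Type*} [TopologicalSpace X]
    [CompactSpace X] [TopologicalSpace Y] [T2Space Y] {l : Filter ι} {u : ι → X} {g : X → Y}
    (hg : Continuous g) {c : Y} (hc : MapClusterPt c l (g ∘ u)) :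
    ∃ y, MapClusterPt y l u ∧ g y = c := by
  have : (map u l ⊓ comap g (𝓝 c)).NeBot := by
    rw [← map_neBot_iff g, Filter.push_pull, inf_comm, map_map]
    exact hc
  obtain ⟨y, -, hy⟩ := isCompact_univ.exists_clusterPt (f := map u l ⊓ comap g (𝓝 c))
    (le_principal_iff.2 univ_mem)
  refine ⟨y, hy.mono inf_le_left, ?_⟩
  have := hy.map hg.continuousAt (tendsto_comap.mono_left inf_le_right)
  by_contra hne
  exact this.ne (disjoint_iff.1 (disjoint_nhds_nhds.2 hne))

theorem not_countable_setOf_mapClusterPt {X : Type*} [TopologicalSpace X] [CompactSpace X]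
    {u : ℕ → X} {g : X → ℝ} (hg : Continuous g)
    (hu : Tendsto (fun n ↦ g (u (n + 1)) - g (u n)) atTop (𝓝 0)) {y₁ y₂ : X}
    (h₁ : MapClusterPt y₁ atTop u) (h₂ : MapClusterPt y₂ atTop u) (hne : g y₁ ≠ g y₂) :
    ¬ {y | MapClusterPt y atTop u}.Countable := by
  intro hcount
  have hsub : uIcc (g y₁) (g y₂) ⊆ g '' {y | MapClusterPt y atTop u} :=
    ((ordConnected_setOf_mapClusterPt_of_tendsto_sub hu).uIcc_subset
      (h₁.tendsto_comp hg.continuousAt) (h₂.tendsto_comp hg.continuousAt)).trans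
      fun c hc ↦ exists_mapClusterPt_eq_of_mapClusterPt_comp hg hc
  have := (hcount.image g).mono hsub
  rw [uIcc, Cardinal.Real.Icc_countable_iff] at this
  exact (min_lt_max.2 hne).not_ge this

theorem pomega_eq_setOf_mapClusterPt (f : M → M) (x : M) :
    pomega f x = {μ | MapClusterPt μ atTop (empiric f x)} :=
  Set.ext fun _ ↦ ⟨fun ⟨_, hφ, hμ⟩ ↦ hμ.mapClusterPt.of_comp hφ.tendsto_atTop,
    MapClusterPt.tendsto_subseq⟩

theorem integral_empiric (f : M → M) (x : M) (g : M →ᵇ ℝ) (n : ℕ) :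
    ∫ z, g z ∂(empiric f x n : Measure M) = birkhoffAverage ℝ f g (n + 1) x := by
  have hcoe : (empiric f x n : Measure M) =
      ((n : ℝ≥0∞) + 1)⁻¹ • ∑ j ∈ Finset.range (n + 1), Measure.dirac (f^[j] x) := rfl
  rw [hcoe, integral_smul_measure, integral_finsetSum_measure fun j _ ↦ g.integrable _]
  simp [birkhoffAverage, birkhoffSum, integral_dirac, ENNReal.toReal_inv, ENNReal.toReal_add]

theorem tendsto_integral_empiric_succ_sub (f : M → M) (x : M) (g : M →ᵇ ℝ) :
    Tendsto (fun n ↦ ∫ z, g z ∂(empiric f x (n + 1) : Measure M) -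
      ∫ z, g z ∂(empiric f x n : Measure M)) atTop (𝓝 0) := by
  simp only [integral_empiric]
  exact (tendsto_birkhoffAverage_succ_sub_birkhoffAverage ℝ
    (g.isBounded_range.subset (range_comp_subset_range _ _))).comp (tendsto_add_atTop_nat 1)

theorem pomega_singleton_or_uncountable_general (f : M → M) (x : M) :
    (∃! μ : ProbabilityMeasure M, μ ∈ pomega f x) ∨ ¬ (pomega f x).Countable := by
  rw [pomega_eq_setOf_mapClusterPt]
  obtain ⟨μ, -, hμ⟩ := isCompact_univ.exists_mapClusterPt (f := atTop) (u := empiric f x)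
    (le_principal_iff.2 univ_mem)
  by_cases hunique : ∀ ν, MapClusterPt ν atTop (empiric f x) → ν = μ
  · exact Or.inl ⟨μ, hμ, hunique⟩
  push Not at hunique
  obtain ⟨ν, hν, hne⟩ := hunique
  obtain ⟨g, hg⟩ : ∃ g : M →ᵇ ℝ, ∫ z, g z ∂(ν : Measure M) ≠ ∫ z, g z ∂(μ : Measure M) := by
    by_contra! h
    exact hne (ProbabilityMeasure.toMeasure_injective
      (ext_of_forall_integral_eq_of_IsFiniteMeasure h))
  exact Or.inr (not_countable_setOf_mapClusterPt
    (ProbabilityMeasure.continuous_integral_boundedContinuousFunction g)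
    (tendsto_integral_empiric_succ_sub f x g) hν hμ hg)

/-- For every `x ∈ M`, the limit set `pω(x)` either consists of a single element or is
uncountable. -/
theorem pomega_singleton_or_uncountable (f : M → M) (hf : Continuous f) (x : M) :
    (∃! μ : ProbabilityMeasure M, μ ∈ pomega f x) ∨ ¬ (pomega f x).Countable :=
  pomega_singleton_or_uncountable_general f x
end

section
/- Fix x ∈ M and write μ_n = E_n(x) for the empiric probabilities. Suppose there exist two strictly increasing sequences of indices (m_j) and (n_j) such that μ_{m_j} → μ and μ_{n_j} → ν in the weak* topology. Then for every λ ∈ [0,1], every ε > 0 and every K > 0 there exists a natural number h > K such that |dist(μ_h, μ) − λ · dist(ν, μ)| ≤ ε, where dist is the Lévy–Prokhorov metric on P. -/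
open MeasureTheory Filter Topology ENNReal NNReal

variable {M : Type*} [MetricSpace M] [CompactSpace M] [MeasurableSpace M] [BorelSpace M]

/-
The distance `a h = dist(μ_h, μ)` changes by at most `1/(h+1)` from one step to the next,
while it comes close to `0` along `(m_j)` and close to `dist(ν, μ)` along `(n_j)`. A sequence
with vanishing increments that goes back and forth between two values passes, for every later
stretch, within `ε` of every intermediate value.
-/

theorem exists_mem_Icc_abs_sub_le_of_abs_sub_succ_le {a : ℕ → ℝ} {t ε : ℝ} {m n : ℕ}
    (hmn : m ≤ n) (hm : a m ≤ t + ε) (hn : t - ε ≤ a n)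
    (hstep : ∀ i ∈ Set.Ico m n, |a (i + 1) - a i| ≤ ε) :
    ∃ h ∈ Set.Icc m n, |a h - t| ≤ ε := by
  induction n, hmn using Nat.le_induction with
  | base => exact ⟨m, ⟨le_rfl, le_rfl⟩, abs_sub_le_iff.2 ⟨by linarith, by linarith⟩⟩
  | succ n hmn ih =>
    by_cases hn' : t - ε ≤ a n
    · obtain ⟨h, ⟨hmh, hhn⟩, hh⟩ := ih hn' fun i hi => hstep i ⟨hi.1, hi.2.trans n.lt_succ_self⟩
      exact ⟨h, ⟨hmh, hhn.trans n.le_succ⟩, hh⟩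
    · have hjump := (abs_le.1 (hstep n ⟨hmn, n.lt_succ_self⟩)).2
      exact ⟨n + 1, ⟨hmn.trans n.le_succ, le_rfl⟩, abs_le.2 ⟨by linarith, by linarith⟩⟩

theorem frequently_abs_sub_le_of_tendsto_succ_sub_zero {a : ℕ → ℝ} {φ ψ : ℕ → ℕ}
    {α β t ε : ℝ} (hstep : Tendsto (fun n => a (n + 1) - a n) atTop (𝓝 0))
    (hφ : Tendsto φ atTop atTop) (hψ : Tendsto ψ atTop atTop)
    (hα : Tendsto (a ∘ φ) atTop (𝓝 α)) (hβ : Tendsto (a ∘ ψ) atTop (𝓝 β))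
    (ht : t ∈ Set.Icc α β) (hε : 0 < ε) :
    ∃ᶠ n in atTop, |a n - t| ≤ ε := by
  rw [frequently_atTop]
  intro N
  obtain ⟨N₀, hN₀⟩ := eventually_atTop.1 <|
    hstep.eventually (Metric.closedBall_mem_nhds (0 : ℝ) hε)
  obtain ⟨j, hjN, hj⟩ := ((hφ.eventually_ge_atTop (max N N₀)).and
    (hα.eventually (gt_mem_nhds (lt_add_of_pos_right α hε)))).exists
  obtain ⟨k, hkj, hk⟩ := ((hψ.eventually_ge_atTop (φ j)).and
    (hβ.eventually (lt_mem_nhds (sub_lt_self β hε)))).exists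
  obtain ⟨h, hh, hht⟩ := exists_mem_Icc_abs_sub_le_of_abs_sub_succ_le hkj
    (a := a) (t := t) (ε := ε) (by simp only [Function.comp_apply] at hj; linarith [ht.1])
    (by simp only [Function.comp_apply] at hk; linarith [ht.2])
    fun i hi => by
      simpa only [Metric.mem_closedBall, Real.dist_eq, sub_zero] using
        hN₀ i ((le_max_right N N₀).trans (hjN.trans hi.1))
  exact ⟨h, (le_max_left N N₀).trans (hjN.trans hh.1), hht⟩

section

variable {X : Type*} [MeasurableSpace X]

theorem empiric_apply (f : X → X) (x : X) (n : ℕ) (B : Set X) :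
    (empiric f x n : Measure X) B
      = ((n : ℝ≥0∞) + 1)⁻¹ * ∑ j ∈ Finset.range (n + 1), Measure.dirac (f^[j] x) B := by
  rw [← smul_eq_mul, ← Measure.finsetSum_apply, ← Measure.smul_apply]
  rfl

theorem empiric_succ_apply_le (f : X → X) (x : X) (n : ℕ) (B : Set X) :
    (empiric f x (n + 1) : Measure X) B ≤ (empiric f x n : Measure X) B + ((n : ℝ≥0∞) + 2)⁻¹ := by
  set S := ∑ j ∈ Finset.range (n + 1), Measure.dirac (f^[j] x) B
  have hcast : ((n + 1 : ℕ) : ℝ≥0∞) + 1 = (n : ℝ≥0∞) + 2 := by push_cast; ring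
  rw [empiric_apply, empiric_apply, Finset.sum_range_succ, hcast]
  calc ((n : ℝ≥0∞) + 2)⁻¹ * (S + Measure.dirac (f^[n + 1] x) B)
      ≤ ((n : ℝ≥0∞) + 2)⁻¹ * (S + 1) := by gcongr; exact prob_le_one
    _ = ((n : ℝ≥0∞) + 2)⁻¹ * S + ((n : ℝ≥0∞) + 2)⁻¹ := by rw [mul_add, mul_one]
    _ ≤ ((n : ℝ≥0∞) + 1)⁻¹ * S + ((n : ℝ≥0∞) + 2)⁻¹ := by gcongr; norm_num

variable [MetricSpace X] [OpensMeasurableSpace X]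

theorem probDist_empiric_succ_le (f : X → X) (x : X) (n : ℕ) :
    probDist (empiric f x (n + 1)) (empiric f x n) ≤ ((n : ℝ) + 2)⁻¹ := by
  refine levyProkhorovDist_le_of_forall_le _ _ (by positivity) fun δ B hδ _ => ?_
  have hδ₀ : 0 < δ := (inv_pos.2 (by positivity)).trans hδ
  calc (empiric f x (n + 1) : Measure X) B
      ≤ (empiric f x n : Measure X) B + ((n : ℝ≥0∞) + 2)⁻¹ := empiric_succ_apply_le f x n B
    _ ≤ (empiric f x n : Measure X) (Metric.thickening δ B) + ENNReal.ofReal δ := by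
      gcongr
      · exact Metric.self_subset_thickening hδ₀ B
      · rw [← ENNReal.ofReal_natCast, ← ENNReal.ofReal_ofNat 2,
          ← ENNReal.ofReal_add (by positivity) (by positivity),
          ← ENNReal.ofReal_inv_of_pos (by positivity)]
        exact ENNReal.ofReal_le_ofReal hδ.le

theorem tendsto_probDist_empiric_succ (f : X → X) (x : X) :
    Tendsto (fun n => probDist (empiric f x (n + 1)) (empiric f x n)) atTop (𝓝 0) := by
  refine squeeze_zero (fun _ => ENNReal.toReal_nonneg) (probDist_empiric_succ_le f x) ?_
  exact tendsto_inv_atTop_zero.comp (tendsto_natCast_atTop_atTop.atTop_add tendsto_const_nhds)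

theorem abs_probDist_sub_le (μ₁ μ₂ ν : ProbabilityMeasure X) :
    |probDist μ₁ ν - probDist μ₂ ν| ≤ probDist μ₁ μ₂ :=
  abs_dist_sub_le (LevyProkhorov.ofMeasure μ₁) (LevyProkhorov.ofMeasure μ₂)
    (LevyProkhorov.ofMeasure ν)

theorem Filter.Tendsto.probDist [TopologicalSpace.SeparableSpace X] {ι : Type*} {l : Filter ι}
    {p q : ι → ProbabilityMeasure X} {p₀ q₀ : ProbabilityMeasure X}
    (hp : Tendsto p l (𝓝 p₀)) (hq : Tendsto q l (𝓝 q₀)) :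
    Tendsto (fun i => _root_.probDist (p i) (q i)) l (𝓝 (_root_.probDist p₀ q₀)) :=
  let e := LevyProkhorov.probabilityMeasureHomeomorph (Ω := X)
  ((e.continuous.tendsto p₀).comp hp).dist ((e.continuous.tendsto q₀).comp hq)

end

theorem empiric_intermediate_distance_general (f : M → M) (x : M)
    (μ ν : ProbabilityMeasure M) (mj nj : ℕ → ℕ) (hmj : StrictMono mj) (hnj : StrictMono nj)
    (hμ : Tendsto (fun j => empiric f x (mj j)) atTop (𝓝 μ))
    (hν : Tendsto (fun j => empiric f x (nj j)) atTop (𝓝 ν))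
    (lam : ℝ) (hlam : lam ∈ Set.Icc (0 : ℝ) 1) (ε : ℝ) (hε : 0 < ε) (K : ℕ) :
    ∃ h : ℕ, K < h ∧ |probDist (empiric f x h) μ - lam * probDist ν μ| ≤ ε := by
  set a : ℕ → ℝ := fun n => probDist (empiric f x n) μ
  have hstep : Tendsto (fun n => a (n + 1) - a n) atTop (𝓝 0) :=
    squeeze_zero_norm (fun _ => abs_probDist_sub_le _ _ μ) (tendsto_probDist_empiric_succ f x)
  have hα : Tendsto (a ∘ mj) atTop (𝓝 0) := by
    have := hμ.probDist (tendsto_const_nhds (x := μ))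
    rwa [probDist, levyProkhorovDist_self] at this
  have hβ : Tendsto (a ∘ nj) atTop (𝓝 (probDist ν μ)) :=
    hν.probDist tendsto_const_nhds
  have hc : 0 ≤ probDist ν μ := ENNReal.toReal_nonneg
  have ht : lam * probDist ν μ ∈ Set.Icc 0 (probDist ν μ) :=
    ⟨mul_nonneg hlam.1 hc, mul_le_of_le_one_left hc hlam.2⟩
  exact frequently_atTop.1 (frequently_abs_sub_le_of_tendsto_succ_sub_zero
    hstep hmj.tendsto_atTop hnj.tendsto_atTop hα hβ ht hε) (K + 1)

/-- If two subsequences of the empiric probabilities of `x` converge to `μ` and `ν`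
respectively, then for every `λ ∈ [0,1]`, every `ε > 0` and every `K`, there exists
`h > K` with `|dist(μ_h, μ) − λ · dist(ν, μ)| ≤ ε`. -/
theorem empiric_intermediate_distance (f : M → M) (hf : Continuous f) (x : M)
    (μ ν : ProbabilityMeasure M) (mj nj : ℕ → ℕ) (hmj : StrictMono mj) (hnj : StrictMono nj)
    (hμ : Tendsto (fun j => empiric f x (mj j)) atTop (𝓝 μ))
    (hν : Tendsto (fun j => empiric f x (nj j)) atTop (𝓝 ν))
    (lam : ℝ) (hlam : lam ∈ Set.Icc (0 : ℝ) 1) (ε : ℝ) (hε : 0 < ε) (K : ℕ) :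
    ∃ h : ℕ, K < h ∧ |probDist (empiric f x h) μ - lam * probDist ν μ| ≤ ε :=
  empiric_intermediate_distance_general f x μ ν mj nj hmj hnj hμ hν lam hlam ε hε K
end
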